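/- Let k ≥ 0 and let K = (0,1)² be the open unit square with boundary ∂K. Then {v ∈ 𝒫_{k+2} ⊕ span{x y^{k+2}, y x^{k+2}} : v vanishes identically on ∂K} = {v ∈ 𝒫_{k+2} : v vanishes identically on ∂K}. Equivalently, if p ∈ 𝒫_{k+2} and a, b ∈ ℝ are such that p + a·x y^{k+2} + b·y x^{k+2} vanishes on all four edges of the unit square, then a = b = 0. -/
import Mathlib


open MvPolynomial

/-- Polynomials on `ℝ²`. -/
abbrev R2 := MvPolynomial (Fin 2) ℝ

set_option maxRecDepth 4000

lemma evalrel (v : Fin 2 → Polynomial ℝ) (y : ℝ) (p : R2) :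
    Polynomial.eval y (aeval v p) = eval (fun i => Polynomial.eval y (v i)) p := by
  induction p using MvPolynomial.induction_on with
  | C r => simp [algebraMap_eq]
  | add p q hp hq => simp [hp, hq]
  | mul_X p i hp => simp [hp]

lemma key1 (p : R2) (n : ℕ) (h : p.totalDegree ≤ n) (t : ℝ) :
    (MvPolynomial.aeval ![Polynomial.C t, Polynomial.X] p).coeff n
      = MvPolynomial.coeff (Finsupp.single 1 n) p := by
  conv_lhs => rw [p.as_sum]
  rw [map_sum, Polynomial.finset_sum_coeff, Finset.sum_eq_single (Finsupp.single 1 n)]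
  · simp [aeval_monomial, Finsupp.prod_fintype, Fin.prod_univ_two, algebraMap_eq,
      ← Polynomial.C_pow, Polynomial.coeff_C_mul, Polynomial.coeff_X_pow]
  · intro s hs hne
    have hsum : s 0 + s 1 ≤ n := by
      have := MvPolynomial.le_totalDegree hs
      rw [Finsupp.sum_fintype _ _ (fun _ => rfl), Fin.sum_univ_two] at this
      omega
    have hs1 : s 1 ≠ n := by
      intro he
      apply hne
      have hs0 : s 0 = 0 := by omega
      ext i
      fin_cases i <;> simp [hs0, he]
    rw [aeval_monomial, Finsupp.prod_fintype _ _ (fun _ => rfl), Fin.prod_univ_two]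
    simp only [Matrix.cons_val_zero, Matrix.cons_val_one, Matrix.head_cons, algebraMap_eq]
    apply Polynomial.coeff_eq_zero_of_natDegree_lt
    have hd : ((algebraMap ℝ (Polynomial ℝ)) (coeff s p) * (Polynomial.C t ^ s 0 *
        Polynomial.X ^ s 1)).natDegree ≤ s 1 := by
      rw [Polynomial.algebraMap_eq]
      compute_degree
    omega
  · intro h
    simp [MvPolynomial.notMem_support_iff.mp h]

lemma key0 (p : R2) (n : ℕ) (h : p.totalDegree ≤ n) (t : ℝ) :
    (MvPolynomial.aeval ![Polynomial.X, Polynomial.C t] p).coeff n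
      = MvPolynomial.coeff (Finsupp.single 0 n) p := by
  conv_lhs => rw [p.as_sum]
  rw [map_sum, Polynomial.finset_sum_coeff, Finset.sum_eq_single (Finsupp.single 0 n)]
  · simp [aeval_monomial, Finsupp.prod_fintype, Fin.prod_univ_two, algebraMap_eq,
      ← Polynomial.C_pow, Polynomial.coeff_C_mul, Polynomial.coeff_X_pow]
  · intro s hs hne
    have hsum : s 0 + s 1 ≤ n := by
      have := MvPolynomial.le_totalDegree hs
      rw [Finsupp.sum_fintype _ _ (fun _ => rfl), Fin.sum_univ_two] at this
      omega
    have hs0 : s 0 ≠ n := by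
      intro he
      apply hne
      have hs1 : s 1 = 0 := by omega
      ext i
      fin_cases i <;> simp [hs1, he]
    rw [aeval_monomial, Finsupp.prod_fintype _ _ (fun _ => rfl), Fin.prod_univ_two]
    simp only [Matrix.cons_val_zero, Matrix.cons_val_one, Matrix.head_cons, algebraMap_eq]
    apply Polynomial.coeff_eq_zero_of_natDegree_lt
    have hd : ((algebraMap ℝ (Polynomial ℝ)) (coeff s p) * (Polynomial.X ^ s 0 *
        Polynomial.C t ^ s 1)).natDegree ≤ s 0 := by
      rw [Polynomial.algebraMap_eq]
      compute_degree
    omega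
  · intro h
    simp [MvPolynomial.notMem_support_iff.mp h]

lemma coeffF1 (k : ℕ) (p : R2) (a b : ℝ) (hp : p.totalDegree ≤ k + 2) (t : ℝ) :
    ((aeval ![Polynomial.C t, Polynomial.X])
      (p + a • (X 0 * X 1 ^ (k + 2)) + b • (X 1 * X 0 ^ (k + 2)))).coeff (k + 2)
      = MvPolynomial.coeff (Finsupp.single 1 (k + 2)) p + a * t := by
  rw [map_add, map_add, Polynomial.coeff_add, Polynomial.coeff_add, key1 p _ hp t]
  rw [map_smul, map_smul, map_mul, map_mul, map_pow, map_pow, aeval_X, aeval_X]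
  simp only [Matrix.cons_val_zero, Matrix.cons_val_one, Matrix.head_cons, Polynomial.coeff_smul]
  rw [Polynomial.coeff_C_mul, Polynomial.coeff_X_pow, if_pos rfl]
  rw [show (Polynomial.X * Polynomial.C t ^ (k+2) : Polynomial ℝ) = Polynomial.X * Polynomial.C (t^(k+2)) by
    rw [Polynomial.C_pow], Polynomial.coeff_mul_C, Polynomial.coeff_X]
  simp [smul_eq_mul, mul_comm]

lemma coeffF0 (k : ℕ) (p : R2) (a b : ℝ) (hp : p.totalDegree ≤ k + 2) (t : ℝ) :
    ((aeval ![Polynomial.X, Polynomial.C t])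
      (p + a • (X 0 * X 1 ^ (k + 2)) + b • (X 1 * X 0 ^ (k + 2)))).coeff (k + 2)
      = MvPolynomial.coeff (Finsupp.single 0 (k + 2)) p + b * t := by
  rw [map_add, map_add, Polynomial.coeff_add, Polynomial.coeff_add, key0 p _ hp t]
  rw [map_smul, map_smul, map_mul, map_mul, map_pow, map_pow, aeval_X, aeval_X]
  simp only [Matrix.cons_val_zero, Matrix.cons_val_one, Matrix.head_cons, Polynomial.coeff_smul]
  rw [show (Polynomial.X * Polynomial.C t ^ (k+2) : Polynomial ℝ) = Polynomial.X * Polynomial.C (t^(k+2)) by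
    rw [Polynomial.C_pow], Polynomial.coeff_mul_C, Polynomial.coeff_X]
  rw [Polynomial.coeff_C_mul, Polynomial.coeff_X_pow, if_pos rfl]
  simp [smul_eq_mul, mul_comm]


/-- If `p ∈ 𝒫_{k+2}` and `a, b ∈ ℝ` are such that
`p + a·x y^{k+2} + b·y x^{k+2}` vanishes identically on the boundary of the
unit square `(0,1)²`, then `a = 0` and `b = 0`; equivalently, the `H¹`-bubble
functions of `𝒫_{k+2} ⊕ span{x y^{k+2}, y x^{k+2}}` on the unit square are
exactly those of `𝒫_{k+2}`. -/
theorem stmt_15 (k : ℕ) (p : R2) (a b : ℝ)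
    (hp : p.totalDegree ≤ k + 2)
    (hbd : ∀ x y : ℝ, x ∈ Set.Icc (0 : ℝ) 1 → y ∈ Set.Icc (0 : ℝ) 1 →
      (x = 0 ∨ x = 1 ∨ y = 0 ∨ y = 1) →
      eval ![x, y] (p + a • (X 0 * X 1 ^ (k + 2)) + b • (X 1 * X 0 ^ (k + 2))) = 0) :
    a = 0 ∧ b = 0 := by
  set F : R2 := p + a • (X 0 * X 1 ^ (k + 2)) + b • (X 1 * X 0 ^ (k + 2)) with hF
  have hicc : (Set.Icc (0:ℝ) 1).Infinite := Set.Icc_infinite (by norm_num)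
  have hv : ∀ t y : ℝ, (fun i => Polynomial.eval y (![Polynomial.C t, Polynomial.X] i)) = ![t, y] := by
    intro t y; funext i; fin_cases i <;> simp
  have hv' : ∀ t y : ℝ, (fun i => Polynomial.eval y (![Polynomial.X, Polynomial.C t] i)) = ![y, t] := by
    intro t y; funext i; fin_cases i <;> simp
  have ha : a = 0 := by
    have h10 : (aeval ![Polynomial.C 1, Polynomial.X] F
        - aeval ![Polynomial.C 0, Polynomial.X] F : Polynomial ℝ) = 0 := by
      apply Polynomial.eq_zero_of_infinite_isRoot
      apply Set.Infinite.mono _ hicc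
      intro y hy
      simp only [Set.mem_setOf_eq, Polynomial.IsRoot, Polynomial.eval_sub, evalrel, hv]
      rw [hbd 1 y (by norm_num) hy (by norm_num), hbd 0 y (by norm_num) hy (by norm_num),
        sub_zero]
    have := congrArg (fun q : Polynomial ℝ => q.coeff (k + 2)) h10
    simp only [Polynomial.coeff_sub, hF, coeffF1 k p a b hp 1, coeffF1 k p a b hp 0,
      Polynomial.coeff_zero] at this
    linarith
  have hb : b = 0 := by
    have h10 : (aeval ![Polynomial.X, Polynomial.C 1] F
        - aeval ![Polynomial.X, Polynomial.C 0] F : Polynomial ℝ) = 0 := by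
      apply Polynomial.eq_zero_of_infinite_isRoot
      apply Set.Infinite.mono _ hicc
      intro y hy
      simp only [Set.mem_setOf_eq, Polynomial.IsRoot, Polynomial.eval_sub, evalrel, hv']
      rw [hbd y 1 hy (by norm_num) (by norm_num), hbd y 0 hy (by norm_num) (by norm_num),
        sub_zero]
    have := congrArg (fun q : Polynomial ℝ => q.coeff (k + 2)) h10
    simp only [Polynomial.coeff_sub, hF, coeffF0 k p a b hp 1, coeffF0 k p a b hp 0,
      Polynomial.coeff_zero] at this
    linarith
  exact ⟨ha, hb⟩
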